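/- (Optimal value of the work-guarantee ratio.) Suppose g > 0, ∑_{v∈V} A v > 0, and let ω = (∑_{v∈V} W v)/(∑_{v∈V} A v) be the ratio of total work time to total active time. Assume the assignment algorithm behaves ideally in the sense that either (Case 1) every agent's guarantee is met by actual work, g · A v ≤ W v for all v ∈ V, or (Case 2) no agent works beyond their guarantee, W v ≤ g · A v for all v ∈ V. Then in either case the platform cost satisfies C(g) ≥ P_min · ∑_{v∈V} A v, and this lower bound is attained at g = ω (in Case 1 one has C(ω) = P_min · ∑_{v∈V} A v, and in Case 2 the cost is identically P_min · ∑_{v∈V} A v). Hence the choice g = ω minimizes the platform cost. -/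
import Mathlib


/-- The platform cost
`C(g) = (P_min/g) · ∑ v, W v + (P_min/g) · ∑ v, max 0 (g·A v − W v)`. -/
noncomputable def platformCost {V : Type*} [Fintype V]
    (W A : V → ℝ) (Pmin g : ℝ) : ℝ :=
  (Pmin / g) * ∑ v : V, W v + (Pmin / g) * ∑ v : V, max 0 (g * A v - W v)

/-- (Optimal value of the work-guarantee ratio.)  Suppose
`g > 0`, `∑ v, A v > 0`, and the assignment algorithm behaves ideally: either
(Case 1) every agent's guarantee is met by actual work, `g·A v ≤ W v` for all
`v`, or (Case 2) no agent works beyond their guarantee, `W v ≤ g·A v` for all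
`v`.  Then `C(g) ≥ P_min · ∑ v, A v`; the bound is attained at
`g = ω = (∑ v, W v)/(∑ v, A v)`, and in Case 2 the cost is identically
`P_min · ∑ v, A v`.  Hence `g = ω` minimizes the platform cost. -/
theorem optimal_work_guarantee_ratio
    {V : Type*} [Fintype V] (W A : V → ℝ) (Pmin g : ℝ)
    (hW : ∀ v, 0 ≤ W v) (hA : ∀ v, 0 ≤ A v)
    (hPmin : 0 < Pmin) (hg : 0 < g)
    (hAsum : 0 < ∑ v : V, A v)
    (hideal : (∀ v, g * A v ≤ W v) ∨ (∀ v, W v ≤ g * A v)) :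
    Pmin * ∑ v : V, A v ≤ platformCost W A Pmin g ∧
    (g = (∑ v : V, W v) / (∑ v : V, A v) →
      platformCost W A Pmin g = Pmin * ∑ v : V, A v) ∧
    ((∀ v, W v ≤ g * A v) →
      platformCost W A Pmin g = Pmin * ∑ v : V, A v) := by
  have hcase2 : (∀ v, W v ≤ g * A v) →
      platformCost W A Pmin g = Pmin * ∑ v : V, A v := by
    intro h
    have hmax : ∀ v : V, max 0 (g * A v - W v) = g * A v - W v := by
      intro v; exact max_eq_right (by linarith [h v])
    have hsum : ∑ v : V, max 0 (g * A v - W v) = g * (∑ v : V, A v) - ∑ v : V, W v := by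
      simp_rw [hmax]
      rw [Finset.sum_sub_distrib, Finset.mul_sum]
    unfold platformCost
    rw [hsum]
    field_simp
    ring
  have hcase1 : (∀ v, g * A v ≤ W v) →
      ∑ v : V, max 0 (g * A v - W v) = 0 := by
    intro h
    apply Finset.sum_eq_zero
    intro v _
    exact max_eq_left (by linarith [h v])
  have hWsum : ∀ (_ : ∀ v, g * A v ≤ W v), g * (∑ v : V, A v) ≤ ∑ v : V, W v := by
    intro h
    rw [Finset.mul_sum]
    exact Finset.sum_le_sum fun v _ => h v
  refine ⟨?_, ?_, hcase2⟩
  · rcases hideal with h | h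
    · have h0 := hcase1 h
      unfold platformCost
      rw [h0, mul_zero, add_zero]
      have : Pmin / g * (g * ∑ v : V, A v) ≤ Pmin / g * ∑ v : V, W v :=
        mul_le_mul_of_nonneg_left (hWsum h) (by positivity)
      calc Pmin * ∑ v : V, A v = Pmin / g * (g * ∑ v : V, A v) := by
            field_simp
        _ ≤ _ := this
    · exact le_of_eq (hcase2 h).symm
  · intro hgω
    rcases hideal with h | h
    · have h0 := hcase1 h
      have hWs : g * (∑ v : V, A v) = ∑ v : V, W v := by
        rw [hgω]; field_simp
      unfold platformCost
      rw [h0, mul_zero, add_zero, ← hWs]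
      field_simp
    · exact hcase2 h
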